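/- For every α ∈ (0, 1/2), lim_{s→∞} ℓ^α(s)/√s = −2Φ^{−1}(α), where ℓ^α(s) is the unique positive root in ℓ of J(s,ℓ) = α. -/

import Mathlib

/-!
Write `u = ℓ/√s`. The second summand of `J` is positive, so at a root `Φ(-u/2) < J = α = Φ(q)`,
hence `u > -2q` for every `s` by strict monotonicity of `Φ`. Conversely, after Mills' ratio
bound `Φ(-x) ≤ e^{-x²/2}/(x√(2π))` the two exponentials in the second summand combine to
`exp(-ℓ²/(8s)) ≤ 1`, and with `u > -2q` that summand is `O(1/s)`; so `Φ(-u/2) ≥ α - O(1/s)`,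
which forces `limsup u ≤ -2q`.
-/

open Real Set Filter Topology

noncomputable def Phi (x : ℝ) : ℝ :=
  (Real.sqrt (2 * Real.pi))⁻¹ * ∫ y in Set.Iic x, Real.exp (-y ^ 2 / 2)

noncomputable def J (s ℓ : ℝ) : ℝ :=
  Phi (-ℓ / (2 * Real.sqrt s)) +
    Real.exp (ℓ ^ 2 * (s - 1) / 2) * Phi (ℓ * (1 / (2 * Real.sqrt s) - Real.sqrt s))

open MeasureTheory

lemma exp_neg_sq_div_two_eq (y : ℝ) : exp (-y ^ 2 / 2) = exp (-(1 / 2) * y ^ 2) := by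
  ring_nf

lemma integrable_exp_neg_sq_div_two : Integrable fun y : ℝ => exp (-y ^ 2 / 2) := by
  simpa only [exp_neg_sq_div_two_eq] using integrable_exp_neg_mul_sq (b := 1 / 2) (by norm_num)

lemma integrable_neg_mul_exp_neg_sq_div_two : Integrable fun y : ℝ => -y * exp (-y ^ 2 / 2) := by
  convert (integrable_mul_exp_neg_mul_sq (b := 1 / 2) (by norm_num)).neg using 1
  ext y
  rw [Pi.neg_apply, exp_neg_sq_div_two_eq, neg_mul]

lemma Phi_strictMono : StrictMono Phi := by
  intro x y hxy
  have hint := integrable_exp_neg_sq_div_two.integrableOn (s := Iic x)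
  have hint' := integrable_exp_neg_sq_div_two.integrableOn (s := Iic y)
  have hpos : 0 < ∫ z in x..y, exp (-z ^ 2 / 2) :=
    intervalIntegral.intervalIntegral_pos_of_pos
      integrable_exp_neg_sq_div_two.intervalIntegrable (fun z => exp_pos _) hxy
  rw [← intervalIntegral.integral_Iic_sub_Iic hint hint', sub_pos] at hpos
  exact mul_lt_mul_of_pos_left hpos (by positivity)

lemma Phi_pos (x : ℝ) : 0 < Phi x := by
  have : 0 ≤ Phi (x - 1) :=
    mul_nonneg (by positivity) (setIntegral_nonneg measurableSet_Iic fun y _ => (exp_pos _).le)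
  exact this.trans_lt (Phi_strictMono (sub_one_lt x))

lemma Phi_zero : Phi 0 = 1 / 2 := by
  have half : ∫ y in Iic (0 : ℝ), exp (-y ^ 2 / 2) = √(2 * π) / 2 := by
    have := integral_comp_neg_Iic 0 fun y : ℝ => exp (-(1 / 2) * y ^ 2)
    simp only [neg_zero, integral_gaussian_Ioi, neg_sq, div_div_eq_mul_div, div_one] at this
    simpa only [exp_neg_sq_div_two_eq, mul_comm π] using this
  rw [Phi, half]
  field_simp

lemma integral_Iic_neg_mul_exp_neg_sq_div_two (a : ℝ) :
    ∫ y in Iic a, -y * exp (-y ^ 2 / 2) = exp (-a ^ 2 / 2) := by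
  have hderiv (y : ℝ) :
      HasDerivAt (fun y : ℝ => exp (-y ^ 2 / 2)) (-y * exp (-y ^ 2 / 2)) y := by
    have hsq : HasDerivAt (fun y : ℝ => -y ^ 2 / 2) (-y) y :=
      ((hasDerivAt_pow 2 y).neg.div_const 2).congr_deriv (by ring)
    simpa only [mul_comm] using hsq.exp
  have hlim : Tendsto (fun y : ℝ => exp (-y ^ 2 / 2)) atBot (𝓝 0) := by
    have hsq : Tendsto (fun y : ℝ => y ^ 2 / 2) atBot atTop := by
      simpa [Function.comp_def, neg_sq] using
        ((tendsto_pow_atTop two_ne_zero).comp tendsto_neg_atBot_atTop).atTop_div_const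
          (zero_lt_two' ℝ)
    simpa only [Function.comp_def, neg_div] using
      tendsto_exp_atBot.comp (tendsto_neg_atTop_atBot.comp hsq)
  simpa using integral_Iic_of_hasDerivAt_of_tendsto' (fun y _ => hderiv y)
    integrable_neg_mul_exp_neg_sq_div_two.integrableOn hlim

lemma Phi_neg_le {x : ℝ} (hx : 0 < x) : Phi (-x) ≤ exp (-x ^ 2 / 2) / (x * √(2 * π)) := by
  have hbound :
      ∫ y in Iic (-x), exp (-y ^ 2 / 2) ≤ ∫ y in Iic (-x), -y * exp (-y ^ 2 / 2) / x := by
    refine setIntegral_mono_on integrable_exp_neg_sq_div_two.integrableOn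
      (integrable_neg_mul_exp_neg_sq_div_two.div_const x).integrableOn measurableSet_Iic ?_
    intro y (hy : y ≤ -x)
    rw [le_div_iff₀ hx]
    nlinarith [exp_pos (-y ^ 2 / 2)]
  rw [integral_div, integral_Iic_neg_mul_exp_neg_sq_div_two, neg_sq] at hbound
  calc Phi (-x) ≤ (√(2 * π))⁻¹ * (exp (-x ^ 2 / 2) / x) :=
        mul_le_mul_of_nonneg_left hbound (by positivity)
    _ = exp (-x ^ 2 / 2) / (x * √(2 * π)) := by ring

lemma Phi_lt_J (s ℓ : ℝ) : Phi (-ℓ / (2 * √s)) < J s ℓ :=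
  lt_add_of_pos_right _ (mul_pos (exp_pos _) (Phi_pos _))

lemma J_le_Phi_add {s ℓ : ℝ} (hs : 1 / 2 < s) (hℓ : 0 < ℓ) :
    J s ℓ ≤ Phi (-ℓ / (2 * √s)) +
      √(2 * s) / (ℓ * (2 * s - 1) * √π) * exp (-ℓ ^ 2 / (8 * s)) := by
  obtain ⟨r, hr, rfl⟩ : ∃ r, 0 < r ∧ s = r ^ 2 :=
    ⟨√s, by positivity, (sq_sqrt (by linarith)).symm⟩
  have h2r : 0 < 2 * r ^ 2 - 1 := by linarith
  set x := ℓ * (2 * r ^ 2 - 1) / (2 * r) with hx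
  have hxpos : 0 < x := by positivity
  have harg : ℓ * (1 / (2 * r) - r) = -x := by
    rw [hx]; field_simp; ring
  have hexp : ℓ ^ 2 * (r ^ 2 - 1) / 2 + -x ^ 2 / 2 = -ℓ ^ 2 / (8 * r ^ 2) := by
    rw [hx]; field_simp; ring
  have hsqrt : √(2 * r ^ 2) = √2 * r := by
    rw [sqrt_mul zero_le_two, sqrt_sq hr.le]
  rw [J, sqrt_sq hr.le, harg]
  refine add_le_add_right ?_ _
  calc exp (ℓ ^ 2 * (r ^ 2 - 1) / 2) * Phi (-x)
      ≤ exp (ℓ ^ 2 * (r ^ 2 - 1) / 2) * (exp (-x ^ 2 / 2) / (x * √(2 * π))) := by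
        gcongr; exact Phi_neg_le hxpos
    _ = √(2 * r ^ 2) / (ℓ * (2 * r ^ 2 - 1) * √π) * exp (-ℓ ^ 2 / (8 * r ^ 2)) := by
        rw [mul_div_assoc', ← exp_add, hexp, hsqrt, sqrt_mul zero_le_two, hx]
        field_simp
        rw [sq_sqrt zero_le_two]

lemma neg_two_mul_lt_div_sqrt_of_J_eq {s ℓ q : ℝ} (h : J s ℓ = Phi q) :
    -2 * q < ℓ / √s := by
  have hlt : -ℓ / (2 * √s) < q := Phi_strictMono.lt_iff_lt.1 (h ▸ Phi_lt_J s ℓ)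
  have : -ℓ / (2 * √s) = -(ℓ / √s) / 2 := by ring
  linarith

lemma J_le_of_lt_div_sqrt {s ℓ c : ℝ} (hs : 1 / 2 < s) (hc : 0 < c) (hℓ : c < ℓ / √s) :
    J s ℓ ≤ Phi (-(ℓ / √s) / 2) + √2 / (c * (2 * s - 1) * √π) := by
  have hr : 0 < √s := sqrt_pos.2 (by linarith)
  have hℓ0 : 0 < ℓ := (mul_pos hc hr).trans ((lt_div_iff₀ hr).1 hℓ)
  have h2s : 0 < 2 * s - 1 := by linarith
  have hexp : exp (-ℓ ^ 2 / (8 * s)) ≤ 1 := exp_le_one_iff.2 (by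
    have : 0 ≤ ℓ ^ 2 / (8 * s) := by positivity
    rw [neg_div]; linarith)
  calc J s ℓ ≤ Phi (-ℓ / (2 * √s)) +
        √(2 * s) / (ℓ * (2 * s - 1) * √π) * exp (-ℓ ^ 2 / (8 * s)) := J_le_Phi_add hs hℓ0
    _ ≤ Phi (-ℓ / (2 * √s)) + √(2 * s) / (ℓ * (2 * s - 1) * √π) := by
        gcongr
        exact mul_le_of_le_one_right (by positivity) hexp
    _ = Phi (-(ℓ / √s) / 2) + √2 / (ℓ / √s * (2 * s - 1) * √π) := by
        have hhalf : -ℓ / (2 * √s) = -(ℓ / √s) / 2 := by ring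
        have hfrac :
            √(2 * s) / (ℓ * (2 * s - 1) * √π) = √2 / (ℓ / √s * (2 * s - 1) * √π) := by
          rw [sqrt_mul zero_le_two]
          field_simp
        rw [hhalf, hfrac]
    _ ≤ Phi (-(ℓ / √s) / 2) + √2 / (c * (2 * s - 1) * √π) := by
        gcongr

/-- `q` stands for `Φ⁻¹(α)` and `ℓα s` for the root `ℓ^α(s)`. -/
theorem lalpha_tendsto_infty (α : ℝ) (hα : α ∈ Set.Ioo (0 : ℝ) (1 / 2))
    (q : ℝ) (hq : Phi q = α)
    (ℓα : ℝ → ℝ) (hroot : ∀ s : ℝ, 0 < s → 0 < ℓα s ∧ J s (ℓα s) = α) :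
    Tendsto (fun s => ℓα s / Real.sqrt s) atTop (𝓝 (-2 * q)) := by
  have hq0 : 0 < -2 * q := by
    have : q < 0 := Phi_strictMono.lt_iff_lt.1 (by rw [hq, Phi_zero]; exact hα.2)
    linarith
  have lower (s : ℝ) (hs : 0 < s) : -2 * q < ℓα s / √s :=
    neg_two_mul_lt_div_sqrt_of_J_eq ((hroot s hs).2.trans hq.symm)
  have upper (s : ℝ) (hs : 1 / 2 < s) :
      α ≤ Phi (-(ℓα s / √s) / 2) + √2 / (-2 * q * (2 * s - 1) * √π) :=
    (hroot s (by linarith)).2 ▸ J_le_of_lt_div_sqrt hs hq0 (lower s (by linarith))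
  have herr : Tendsto (fun s : ℝ => √2 / (-2 * q * (2 * s - 1) * √π)) atTop (𝓝 0) := by
    refine tendsto_const_nhds.div_atTop (Tendsto.atTop_mul_const (by positivity) ?_)
    refine Tendsto.const_mul_atTop hq0 (tendsto_atTop_add_const_right _ (-1) ?_)
    exact tendsto_id.const_mul_atTop two_pos
  refine tendsto_order.2 ⟨fun a ha => ?_, fun b hb => ?_⟩
  · filter_upwards [eventually_gt_atTop 0] with s hs
    exact ha.trans (lower s hs)
  · have hgap : Phi (-b / 2) < α := hq ▸ Phi_strictMono (by linarith)
    filter_upwards [herr.eventually_lt_const (sub_pos.2 hgap), eventually_gt_atTop (1 / 2)]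
      with s herr_s hs
    have : -b / 2 < -(ℓα s / √s) / 2 :=
      Phi_strictMono.lt_iff_lt.1 (by linarith [upper s hs])
    linarith
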